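/- For every integer n ≥ 1 and every t with 0 < t ≤ 1, the following integral identity holds: ∫_t^1 (1 - τ²)ⁿ · (τ² - t²)/(2τ) dτ = - ∫_t^1 (ρ² - t²)ⁿ · ((1 - ρ^{-2n})/(2n)) · ρ dρ. -/

import Mathlib

/-!
The substitution `ρ = t / τ` maps `[t, 1]` onto itself and turns the part
`(ρ² - t²)ⁿ ρ^{-2n} ρ = (1 - t²/ρ²)ⁿ ρ` of the right-hand integrand into `t² (1 - τ²)ⁿ / τ³`.
After it, `4n(n + 1)` times the difference of the two sides is the integral over `[t, 1]` of the
derivative of `primitive n t`, which takes the same value `(1 - t²)^{n+1}` at `t` and at `1`.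
-/

open intervalIntegral Set
open MeasureTheory (volume)
open scoped Interval

theorem pos_of_mem_uIcc {α : Type*} [LinearOrder α] [Zero α] {a b x : α} (ha : 0 < a)
    (hb : 0 < b) (hx : x ∈ [[a, b]]) : 0 < x :=
  (lt_min ha hb).trans_le hx.1

theorem sq_sub_pow_mul_zpow_neg_two_mul {K : Type*} [Field K] {ρ : K} (hρ : ρ ≠ 0) (s : K)
    (n : ℕ) : (ρ ^ 2 - s) ^ n * ρ ^ (-(2 * (n : ℤ))) = (1 - s / ρ ^ 2) ^ n := by
  rw [zpow_neg, show 2 * (n : ℤ) = ((2 * n : ℕ) : ℤ) by push_cast; ring, zpow_natCast, pow_mul,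
    ← div_eq_mul_inv, ← div_pow, sub_div, div_self (pow_ne_zero 2 hρ)]

theorem integral_comp_div_mul_div_sq {a b c : ℝ} {g : ℝ → ℝ} (ha : 0 < a) (hb : 0 < b)
    (hg : ContinuousOn g [[c / b, c / a]]) :
    ∫ x in a..b, g (c / x) * (c / x ^ 2) = ∫ u in c / b..c / a, g u := by
  have hpos : ∀ x ∈ [[a, b]], 0 < x := fun x => pos_of_mem_uIcc ha hb
  have hderiv : ∀ x ∈ [[a, b]], HasDerivAt (c / ·) (-(c / x ^ 2)) x := fun x hx => by
    simpa [div_eq_mul_inv] using (hasDerivAt_inv (hpos x hx).ne').const_mul c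
  have hmaps : (c / ·) '' [[a, b]] ⊆ [[c / b, c / a]] := by
    rw [uIcc_comm (c / b)]
    rcases le_total 0 c with hc | hc
    · exact AntitoneOn.image_uIcc_subset fun x hx y _ hxy =>
        div_le_div_of_nonneg_left hc (hpos x hx) hxy
    · refine MonotoneOn.image_uIcc_subset fun x hx y _ hxy => ?_
      simpa [neg_div] using div_le_div_of_nonneg_left (neg_nonneg.2 hc) (hpos x hx) hxy
  have hcont : ContinuousOn (fun x => -(c / x ^ 2)) [[a, b]] :=
    (continuousOn_const.div (continuousOn_pow 2) fun x hx => pow_ne_zero 2 (hpos x hx).ne').neg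
  have h := integral_comp_mul_deriv' hderiv hcont (hg.mono hmaps)
  simp only [Function.comp_def, mul_neg, intervalIntegral.integral_neg] at h
  rw [integral_symm (c / a), ← h, neg_neg]

theorem integral_one_sub_sq_div_sq_pow_mul (n : ℕ) {t : ℝ} (ht : 0 < t) :
    ∫ ρ in t..1, (1 - t ^ 2 / ρ ^ 2) ^ n * ρ = t ^ 2 * ∫ τ in t..1, (1 - τ ^ 2) ^ n / τ ^ 3 := by
  have hne : ∀ x ∈ [[t, 1]], x ≠ 0 := fun x hx => (pos_of_mem_uIcc ht one_pos hx).ne'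
  have hsub := integral_comp_div_mul_div_sq (g := fun τ => (1 - τ ^ 2) ^ n / τ ^ 3) (c := t) ht
    one_pos (by rw [div_one, div_self ht.ne']; fun_prop (disch := intro x hx; simp [hne x hx]))
  rw [div_one, div_self ht.ne'] at hsub
  rw [← hsub, ← integral_const_mul]
  refine integral_congr fun ρ hρ => ?_
  have hρ0 := hne ρ hρ
  field_simp

noncomputable def primitive (n : ℕ) (t x : ℝ) : ℝ :=
  (x ^ 2 - t ^ 2) ^ (n + 1) + (1 - x ^ 2) ^ (n + 1) * ((n + 1) * t ^ 2 / x ^ 2 - n)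

theorem hasDerivAt_primitive (n : ℕ) (t : ℝ) {x : ℝ} (hx : x ≠ 0) :
    HasDerivAt (primitive n t)
      (2 * (n + 1) * (2 * n * ((1 - x ^ 2) ^ n * ((x ^ 2 - t ^ 2) / (2 * x)))
        - t ^ 2 * ((1 - x ^ 2) ^ n / x ^ 3) + (x ^ 2 - t ^ 2) ^ n * x)) x := by
  have h1 := ((hasDerivAt_pow 2 x).sub_const (t ^ 2)).fun_pow (n + 1)
  have h2 := ((hasDerivAt_pow 2 x).const_sub 1).fun_pow (n + 1)
  have h3 := ((hasDerivAt_const x ((n + 1) * t ^ 2)).fun_div (hasDerivAt_pow 2 x)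
    (pow_ne_zero 2 hx)).sub_const (n : ℝ)
  refine (h1.fun_add (h2.fun_mul h3)).congr_deriv ?_
  push_cast
  field_simp
  ring

theorem primitive_one_eq_primitive_self (n : ℕ) {t : ℝ} (ht : t ≠ 0) :
    primitive n t 1 = primitive n t t := by
  unfold primitive
  field_simp
  ring

theorem two_mul_integral_one_sub_sq_pow_mul_sq_sub_sq_div (n : ℕ) {t : ℝ} (ht : 0 < t) :
    2 * n * ∫ τ in t..1, (1 - τ ^ 2) ^ n * ((τ ^ 2 - t ^ 2) / (2 * τ)) =
      t ^ 2 * (∫ τ in t..1, (1 - τ ^ 2) ^ n / τ ^ 3) - ∫ τ in t..1, (τ ^ 2 - t ^ 2) ^ n * τ := by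
  have hne : ∀ x ∈ [[t, 1]], x ≠ 0 := fun x hx => (pos_of_mem_uIcc ht one_pos hx).ne'
  have hf :
      IntervalIntegrable (fun τ => (1 - τ ^ 2) ^ n * ((τ ^ 2 - t ^ 2) / (2 * τ))) volume t 1 :=
    ContinuousOn.intervalIntegrable (by fun_prop (disch := intro x hx; simp [hne x hx]))
  have hQ : IntervalIntegrable (fun τ => (1 - τ ^ 2) ^ n / τ ^ 3) volume t 1 :=
    ContinuousOn.intervalIntegrable (by fun_prop (disch := intro x hx; simp [hne x hx]))
  have hP : IntervalIntegrable (fun τ => (τ ^ 2 - t ^ 2) ^ n * τ) volume t 1 :=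
    Continuous.intervalIntegrable (by fun_prop) t 1
  have hFTC := integral_eq_sub_of_hasDerivAt
    (fun x hx => hasDerivAt_primitive n t (hne x hx))
    ((((hf.const_mul (2 * n)).sub (hQ.const_mul (t ^ 2))).add hP).const_mul (2 * (n + 1)))
  rw [primitive_one_eq_primitive_self n ht.ne', sub_self, integral_const_mul,
    integral_add ((hf.const_mul _).sub (hQ.const_mul _)) hP,
    integral_sub (hf.const_mul _) (hQ.const_mul _), integral_const_mul, integral_const_mul] at hFTC
  have hn1 : (2 * (n + 1) : ℝ) ≠ 0 := by positivity
  linear_combination (mul_eq_zero.1 hFTC).resolve_left hn1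

theorem statement15_general (n : ℕ) (hn : 1 ≤ n) (t : ℝ) (ht0 : 0 < t) :
    ∫ τ in t..1, (1 - τ ^ 2) ^ n * ((τ ^ 2 - t ^ 2) / (2 * τ)) =
      -∫ ρ in t..1, (ρ ^ 2 - t ^ 2) ^ n * ((1 - ρ ^ (-(2 * (n : ℤ)))) / (2 * n)) * ρ := by
  have hne : ∀ x ∈ [[t, 1]], x ≠ 0 := fun x hx => (pos_of_mem_uIcc ht0 one_pos hx).ne'
  have h2n : (2 * n : ℝ) ≠ 0 := mul_ne_zero two_ne_zero (Nat.cast_ne_zero.2 (by omega))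
  have hP : IntervalIntegrable (fun ρ => (ρ ^ 2 - t ^ 2) ^ n * ρ) volume t 1 :=
    Continuous.intervalIntegrable (by fun_prop) t 1
  have hS : IntervalIntegrable (fun ρ => (1 - t ^ 2 / ρ ^ 2) ^ n * ρ) volume t 1 :=
    ContinuousOn.intervalIntegrable (by fun_prop (disch := intro x hx; simp [hne x hx]))
  have hR : EqOn (fun ρ => (ρ ^ 2 - t ^ 2) ^ n * ((1 - ρ ^ (-(2 * (n : ℤ)))) / (2 * n)) * ρ)
      (fun ρ => ((ρ ^ 2 - t ^ 2) ^ n * ρ - (1 - t ^ 2 / ρ ^ 2) ^ n * ρ) / (2 * n)) [[t, 1]] :=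
    fun ρ hρ => by
      simp only [← sq_sub_pow_mul_zpow_neg_two_mul (hne ρ hρ)]
      ring
  rw [integral_congr hR, integral_div, integral_sub hP hS,
    integral_one_sub_sq_div_sq_pow_mul n ht0, ← neg_div, eq_div_iff h2n]
  linear_combination two_mul_integral_one_sub_sq_pow_mul_sq_sub_sq_div n ht0

/-- The integral identity behind equation (4.13): for every integer `n ≥ 1` and every
`0 < t ≤ 1`,
`∫_t^1 (1 - τ²)ⁿ (τ² - t²)/(2τ) dτ = - ∫_t^1 (ρ² - t²)ⁿ ((1 - ρ^{-2n})/(2n)) ρ dρ`. -/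
theorem statement15 (n : ℕ) (hn : 1 ≤ n) (t : ℝ) (ht0 : 0 < t) (ht1 : t ≤ 1) :
    ∫ τ in t..1, (1 - τ ^ 2) ^ n * ((τ ^ 2 - t ^ 2) / (2 * τ)) =
      -∫ ρ in t..1, (ρ ^ 2 - t ^ 2) ^ n * ((1 - ρ ^ (-(2 * (n : ℤ)))) / (2 * n)) * ρ :=
  statement15_general n hn t ht0
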